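/- arXiv:2605.17725 — 2 statements merged into one kernel-verified Lean document; each statement's English description precedes it below -/
import Mathlib

section
/- Assume β = (α+1)/2 and 0 < α < 1. Let G_n = S_n/√n. Then sup_{n≥1} E[‖G_n‖²] < ∞. -/
open MeasureTheory Filter Real
open scoped ENNReal NNReal Topology RealInnerProductSpace

noncomputable section

namespace RWSD

variable {Ω : Type*} {d : ℕ}

/-- The random walk `S_n = X_1 + ⋯ + X_n` (with `S_0 = 0`). -/
def S (X : ℕ → Ω → EuclideanSpace ℝ (Fin d)) (n : ℕ) (ω : Ω) :
    EuclideanSpace ℝ (Fin d) :=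
  ∑ k ∈ Finset.range n, X (k + 1) ω

/-- The natural filtration `F_n = σ(X_1, …, X_n)`. -/
def natF (X : ℕ → Ω → EuclideanSpace ℝ (Fin d)) (n : ℕ) :
    MeasurableSpace Ω :=
  ⨆ k ∈ Finset.range n, MeasurableSpace.comap (X (k + 1)) inferInstance

/-- The drift field `H(s) = ‖s‖^{α-1} s` (so that `H 0 = 0`). -/
def Hfun (α : ℝ) (s : EuclideanSpace ℝ (Fin d)) : EuclideanSpace ℝ (Fin d) :=
  (‖s‖ ^ (α - 1)) • s

/-- `ν` is the centered Gaussian law `N(0, C)` on `ℝ^d`: it is a probability measure such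
that every linear functional `x ↦ ⟪v, x⟫` is a centered real Gaussian with variance `vᵀ C v`. -/
def IsGaussianLaw (C : Matrix (Fin d) (Fin d) ℝ)
    (ν : Measure (EuclideanSpace ℝ (Fin d))) : Prop :=
  IsProbabilityMeasure ν ∧
    ∀ v : EuclideanSpace ℝ (Fin d),
      ν.map (fun x => ⟪v, x⟫) =
        ProbabilityTheory.gaussianReal 0 ((∑ i, ∑ j, v i * C i j * v j).toNNReal)

/-- Standing assumptions on the random walk with spatio-temporal drift
`E[X_{n+1} | F_n] = H(S_n)/n^β`, `E[X_{n+1} X_{n+1}ᵀ | F_n] = Σ`, together with the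
moment assumption `sup_n E[‖X_n‖^p] < ∞` for some `p > 2` and `E[X_1] = 0`. -/
structure Assumptions [MeasurableSpace Ω] (μ : Measure Ω)
    (X : ℕ → Ω → EuclideanSpace ℝ (Fin d)) (α β : ℝ)
    (Sig : Matrix (Fin d) (Fin d) ℝ) : Prop where
  measurable : ∀ n, Measurable (X n)
  mean_zero : ∫ ω, X 1 ω ∂μ = 0
  moment : ∃ p : ℝ, 2 < p ∧ ∃ C : ℝ≥0∞, C < ⊤ ∧
    ∀ n : ℕ, 1 ≤ n → ∫⁻ ω, ENNReal.ofReal (‖X n ω‖ ^ p) ∂μ ≤ C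
  posdef : Sig.PosDef
  drift : ∀ n : ℕ, 1 ≤ n →
    μ[X (n + 1) | natF X n] =ᵐ[μ] fun ω => ((n : ℝ) ^ β)⁻¹ • Hfun α (S X n ω)
  cov : ∀ n : ℕ, 1 ≤ n → ∀ i j : Fin d,
    μ[fun ω => X (n + 1) ω i * X (n + 1) ω j | natF X n] =ᵐ[μ] fun _ => Sig i j

/-- Young-type pointwise inequality. -/
lemma young_aux {q lam x : ℝ} (hq1 : 1 ≤ q) (hq2 : q < 2) (hlam : 0 < lam) (hx : 0 ≤ x) :
    x ^ q ≤ lam * x ^ 2 + lam ^ (-(q / (2 - q))) := by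
  have hq0 : 0 ≤ q := le_trans zero_le_one hq1
  have hx2 : x ^ (2:ℝ) = x ^ 2 := by
    rw [show (2:ℝ) = ((2:ℕ):ℝ) by norm_num, Real.rpow_natCast]
  rcases eq_or_lt_of_le hx with h0 | hxpos
  · rw [← h0, Real.zero_rpow (by linarith : q ≠ 0)]
    positivity
  by_cases hcase : x ≤ lam ^ (-(1 / (2 - q)))
  · have h1 : x ^ q ≤ (lam ^ (-(1 / (2 - q)))) ^ q := Real.rpow_le_rpow hx hcase hq0
    have h2 : (lam ^ (-(1 / (2 - q)))) ^ q = lam ^ (-(q / (2 - q))) := by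
      rw [← Real.rpow_mul hlam.le]
      ring_nf
    nlinarith [Real.rpow_nonneg (le_of_lt hlam) (-(q / (2 - q))),
      mul_nonneg hlam.le (sq_nonneg x)]
  · push_neg at hcase
    have hbase : (0:ℝ) < lam ^ (-(1 / (2 - q))) := Real.rpow_pos_of_pos hlam _
    have h1 : x ^ (q - 2) ≤ (lam ^ (-(1 / (2 - q)))) ^ (q - 2) :=
      Real.rpow_le_rpow_of_nonpos hbase hcase.le (by linarith)
    have h2 : (lam ^ (-(1 / (2 - q)))) ^ (q - 2) = lam := by
      rw [← Real.rpow_mul hlam.le]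
      have hne : (2:ℝ) - q ≠ 0 := by linarith
      rw [show -(1 / (2 - q)) * (q - 2) = 1 by field_simp; ring]
      exact Real.rpow_one lam
    have h3 : x ^ q = x ^ (2:ℝ) * x ^ (q - 2) := by
      rw [← Real.rpow_add hxpos]; ring_nf
    have hx2' : (0:ℝ) ≤ x ^ (2:ℝ) := Real.rpow_nonneg hx 2
    have hmain : x ^ q ≤ x ^ 2 * lam := by
      rw [h3, ← hx2]
      exact mul_le_mul_of_nonneg_left (h2 ▸ h1) hx2'
    nlinarith [Real.rpow_nonneg hlam.le (-(q / (2 - q)))]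

/-- Conditional expectation commutes with continuous linear maps. -/
lemma condexp_comp_clm {m m0 : MeasurableSpace Ω} (hm : m ≤ m0) {μ : Measure Ω}
    [IsFiniteMeasure μ]
    {E F : Type*} [NormedAddCommGroup E] [NormedSpace ℝ E] [CompleteSpace E]
    [NormedAddCommGroup F] [NormedSpace ℝ F] [CompleteSpace F]
    (L : E →L[ℝ] F) {f : Ω → E} (hf : Integrable f μ) :
    (fun ω => L ((μ[f|m]) ω)) =ᵐ[μ] μ[fun ω => L (f ω)|m] := by
  refine ae_eq_condExp_of_forall_setIntegral_eq hm (L.integrable_comp hf) ?_ ?_ ?_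
  · intro s _ _
    exact (L.integrable_comp integrable_condExp).integrableOn
  · intro s hs hμs
    rw [L.integral_comp_comm integrable_condExp.integrableOn,
      L.integral_comp_comm hf.integrableOn, setIntegral_condExp hm hf hs]
  · exact StronglyMeasurable.aestronglyMeasurable
      (L.continuous.comp_stronglyMeasurable stronglyMeasurable_condExp)

lemma euclid_norm_sq (x : EuclideanSpace ℝ (Fin d)) : ‖x‖ ^ 2 = ∑ i, x i * x i := by
  rw [← real_inner_self_eq_norm_sq]
  simp only [PiLp.inner_apply, RCLike.inner_apply, conj_trivial]

lemma abs_coord_le (x : EuclideanSpace ℝ (Fin d)) (i : Fin d) : |x i| ≤ ‖x‖ := by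
  rw [EuclideanSpace.norm_eq, ← Real.sqrt_sq_eq_abs]
  apply Real.sqrt_le_sqrt
  have h := Finset.single_le_sum (f := fun j => ‖x j‖ ^ 2)
    (fun j _ => by positivity) (Finset.mem_univ i)
  simpa [Real.norm_eq_abs, sq_abs] using h

lemma rpow_mul_sq {x : ℝ} (hx : 0 ≤ x) {α : ℝ} (hα0 : 0 < α) (hα1 : α < 1) :
    x ^ (α - 1) * x ^ 2 = x ^ (α + 1) := by
  rcases eq_or_lt_of_le hx with h | h
  · rw [← h, Real.zero_rpow (by linarith : α + 1 ≠ 0)]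
    norm_num
  · rw [show x ^ 2 = x ^ ((2:ℕ):ℝ) by rw [Real.rpow_natCast],
      ← Real.rpow_add h]
    norm_num
    rw [show α - 1 + 2 = α + 1 by ring]

/-- **Lemma (tightness on the critical line).**
If `β = (α+1)/2` and `0 < α < 1`, then with `G_n = S_n / √n` one has
`sup_{n ≥ 1} E[‖G_n‖²] < ∞`. -/
theorem sup_secondMoment_lt_top_on_critical_line
    [m0 : MeasurableSpace Ω] (μ : Measure Ω) [IsProbabilityMeasure μ]
    (X : ℕ → Ω → EuclideanSpace ℝ (Fin d)) (α β : ℝ)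
    (Sig : Matrix (Fin d) (Fin d) ℝ)
    (hα0 : 0 < α) (hα1 : α < 1) (hβ : β = (α + 1) / 2)
    (h : Assumptions μ X α β Sig) :
    ∃ C : ℝ≥0∞, C < ⊤ ∧
      ∀ n : ℕ, 1 ≤ n →
        ∫⁻ ω, (‖(Real.sqrt n)⁻¹ • S X n ω‖₊ : ℝ≥0∞) ^ 2 ∂μ ≤ C := by
  classical
  obtain ⟨p, hp2, Cp, hCp, hmom⟩ := h.moment
  have hp0 : (0:ℝ) < p := by linarith
  -- the filtration is below the ambient σ-algebra
  have hmle : ∀ n, natF X n ≤ m0 := by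
    intro n
    refine iSup_le fun k => iSup_le fun _ => ?_
    exact (h.measurable (k + 1)).comap_le
  -- L^2 bounds
  have hXp : ∀ k, 1 ≤ k → MemLp (X k) (ENNReal.ofReal p) μ := by
    intro k hk
    refine ⟨(h.measurable k).aestronglyMeasurable, ?_⟩
    rw [eLpNorm_eq_lintegral_rpow_enorm_toReal (by simp [hp0] : ENNReal.ofReal p ≠ 0)
      ENNReal.ofReal_ne_top, ENNReal.toReal_ofReal hp0.le]
    have hle : ∫⁻ ω, ‖X k ω‖ₑ ^ p ∂μ ≤ Cp := by
      refine le_trans (le_of_eq (lintegral_congr fun ω => ?_)) (hmom k hk)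
      rw [← ofReal_norm, ENNReal.ofReal_rpow_of_nonneg (norm_nonneg _) hp0.le]
    exact ENNReal.rpow_lt_top_of_nonneg (by positivity) (lt_of_le_of_lt hle hCp).ne
  have hX2 : ∀ k, 1 ≤ k → MemLp (X k) 2 μ := by
    intro k hk
    refine (hXp k hk).mono_exponent ?_
    have := ENNReal.ofReal_le_ofReal hp2.le
    simpa using this
  have hXint : ∀ k, 1 ≤ k → Integrable (X k) μ := fun k hk => (hX2 k hk).integrable one_le_two
  -- S n is measurable w.r.t. natF X n
  have hSm : ∀ n, StronglyMeasurable[natF X n] (S X n) := by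
    intro n
    apply Measurable.stronglyMeasurable
    unfold S
    apply Finset.measurable_sum
    intro k hk
    exact measurable_iff_comap_le.mpr
      (le_iSup₂ (f := fun k (_ : k ∈ Finset.range n) =>
        MeasurableSpace.comap (X (k + 1)) inferInstance) k hk)
  have hSmem2 : ∀ n, MemLp (S X n) 2 μ :=
    fun n => memLp_finset_sum _ fun k _ => hX2 (k + 1) (Nat.le_add_left 1 k)
  have hS2int : ∀ n, Integrable (fun ω => ‖S X n ω‖ ^ 2) μ := fun n => (hSmem2 n).norm.integrable_sq
  -- coordinates
  have hcoordL2 : ∀ k, 1 ≤ k → ∀ i, MemLp (fun ω => X k ω i) 2 μ := by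
    intro k hk i
    refine (hX2 k hk).of_le ?_ (Eventually.of_forall fun ω => ?_)
    · exact ((EuclideanSpace.proj (𝕜 := ℝ) i).continuous.measurable.comp (h.measurable k)).aestronglyMeasurable
    · simpa [Real.norm_eq_abs] using abs_coord_le (X k ω) i
  have hX2sq : ∀ k, 1 ≤ k → Integrable (fun ω => ‖X k ω‖ ^ 2) μ :=
    fun k hk => (hX2 k hk).norm.integrable_sq
  set T : ℝ := ∑ i, Sig i i with hT_def
  have hT0 : 0 ≤ T := by
    refine Finset.sum_nonneg fun i _ => le_of_lt ?_
    exact h.posdef.diag_pos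
  -- variance identity
  have hVar : ∀ n, 1 ≤ n → ∫ ω, ‖X (n + 1) ω‖ ^ 2 ∂μ = T := by
    intro n hn
    have hsq : ∀ i, Integrable (fun ω => X (n + 1) ω i * X (n + 1) ω i) μ := by
      intro i
      have := (hcoordL2 (n + 1) (by omega) i).integrable_sq
      simpa [sq] using this
    calc ∫ ω, ‖X (n + 1) ω‖ ^ 2 ∂μ
        = ∫ ω, ∑ i, X (n + 1) ω i * X (n + 1) ω i ∂μ := by
          refine integral_congr_ae (Eventually.of_forall fun ω => ?_)
          exact euclid_norm_sq _
      _ = ∑ i, ∫ ω, X (n + 1) ω i * X (n + 1) ω i ∂μ := integral_finset_sum _ fun i _ => hsq i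
      _ = T := by
          refine Finset.sum_congr rfl fun i _ => ?_
          rw [← integral_condExp (hmle n) (f := fun ω => X (n + 1) ω i * X (n + 1) ω i),
            integral_congr_ae (h.cov n hn i i)]
          simp
  -- drift identity
  have hInner : ∀ n, 1 ≤ n →
      (Integrable (fun ω => ⟪S X n ω, X (n + 1) ω⟫) μ ∧
      ∫ ω, ⟪S X n ω, X (n + 1) ω⟫ ∂μ
        = (((n:ℝ) ^ β)⁻¹) * ∫ ω, ‖S X n ω‖ ^ (α + 1) ∂μ) := by
    intro n hn
    have hm := hmle n
    have hXi := hXint (n + 1) (by omega)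
    set f : Fin d → Ω → ℝ := fun i ω => S X n ω i with hf_def
    set g : Fin d → Ω → ℝ := fun i ω => X (n + 1) ω i with hg_def
    have hfmeas : ∀ i, StronglyMeasurable[natF X n] (f i) := fun i =>
      (EuclideanSpace.proj (𝕜 := ℝ) i).continuous.comp_stronglyMeasurable (hSm n)
    have hfL2 : ∀ i, MemLp (f i) 2 μ := by
      intro i
      refine (hSmem2 n).of_le ((hfmeas i).mono hm).aestronglyMeasurable
        (Eventually.of_forall fun ω => ?_)
      simpa [hf_def, Real.norm_eq_abs] using abs_coord_le (S X n ω) i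
    have hgL2 : ∀ i, MemLp (g i) 2 μ := fun i => hcoordL2 (n + 1) (by omega) i
    have hfg_int : ∀ i, Integrable (f i * g i) μ := by
      intro i
      have hmem : MemLp (f i • g i) 1 μ :=
        (hgL2 i).smul (hfL2 i) (hpqr := ⟨by rw [inv_one]; exact ENNReal.inv_two_add_inv_two⟩)
      have := memLp_one_iff_integrable.mp hmem
      simpa [smul_eq_mul] using this
    have hsum_eq : (fun ω => ⟪S X n ω, X (n + 1) ω⟫) = ∑ i, f i * g i := by
      funext ω
      simp [PiLp.inner_apply, RCLike.inner_apply, hf_def, hg_def, Finset.sum_apply]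
      exact Finset.sum_congr rfl fun i _ => mul_comm _ _
    have hinner_int : Integrable (fun ω => ⟪S X n ω, X (n + 1) ω⟫) μ := by
      rw [hsum_eq, show (∑ i, f i * g i) = fun ω => ∑ i, (f i * g i) ω from by
        funext ω; simp]
      exact integrable_finset_sum _ fun i _ => hfg_int i
    refine ⟨hinner_int, ?_⟩
    have H1 : ∀ᵐ ω ∂μ, ∀ i,
        (μ[f i * g i|natF X n]) ω = f i ω * (μ[g i|natF X n]) ω := by
      rw [ae_all_iff]
      exact fun i => condExp_mul_of_stronglyMeasurable_left (hfmeas i) (hfg_int i) ((hgL2 i).integrable one_le_two)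
    have H2 : ∀ᵐ ω ∂μ, ∀ i,
        (μ[g i|natF X n]) ω = (((n:ℝ) ^ β)⁻¹ • Hfun α (S X n ω)) i := by
      rw [ae_all_iff]
      intro i
      have hproj := condexp_comp_clm hm (EuclideanSpace.proj (𝕜 := ℝ) i) hXi
      have h1 : μ[g i|natF X n] =ᵐ[μ] fun ω => (μ[X (n + 1)|natF X n]) ω i := by
        have heq : (fun ω => (EuclideanSpace.proj (𝕜 := ℝ) i) (X (n + 1) ω)) = g i := rfl
        exact (heq ▸ hproj).symm
      refine h1.trans ?_
      filter_upwards [h.drift n hn] with ω hω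
      rw [hω]
    have H3 := condExp_finsetSum (s := Finset.univ) (fun i _ => hfg_int i) (m := natF X n) (μ := μ)
    have hcond : μ[fun ω => ⟪S X n ω, X (n + 1) ω⟫|natF X n] =ᵐ[μ]
        fun ω => (((n:ℝ) ^ β)⁻¹) * ‖S X n ω‖ ^ (α + 1) := by
      rw [hsum_eq]
      refine H3.trans ?_
      filter_upwards [H1, H2] with ω h1 h2
      simp only [Finset.sum_apply]
      have : ∀ i, (μ[f i * g i|natF X n]) ω
          = ((n:ℝ) ^ β)⁻¹ * (‖S X n ω‖ ^ (α - 1) * (S X n ω i * S X n ω i)) := by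
        intro i
        rw [h1 i, h2 i]
        simp only [Hfun, PiLp.smul_apply, smul_eq_mul, hf_def]
        ring
      rw [Finset.sum_congr rfl fun i _ => this i, ← Finset.mul_sum, ← Finset.mul_sum,
        ← euclid_norm_sq, rpow_mul_sq (norm_nonneg _) hα0 hα1]
    calc ∫ ω, ⟪S X n ω, X (n + 1) ω⟫ ∂μ
        = ∫ ω, (μ[fun ω' => ⟪S X n ω', X (n + 1) ω'⟫|natF X n]) ω ∂μ :=
          (integral_condExp hm).symm
      _ = ∫ ω, (((n:ℝ) ^ β)⁻¹) * ‖S X n ω‖ ^ (α + 1) ∂μ := integral_congr_ae hcond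
      _ = (((n:ℝ) ^ β)⁻¹) * ∫ ω, ‖S X n ω‖ ^ (α + 1) ∂μ := integral_const_mul _ _
  -- the recursion
  set a : ℕ → ℝ := fun n => ∫ ω, ‖S X n ω‖ ^ 2 ∂μ with ha_def
  have ha0 : ∀ n, 0 ≤ a n := fun n => integral_nonneg fun ω => by positivity
  have h1α : (0:ℝ) < 1 - α := by linarith
  set e : ℝ := (α + 1) / (1 - α) with he_def
  set D : ℝ := 2 * (4:ℝ) ^ e + T with hD_def
  have h4e : (0:ℝ) < (4:ℝ) ^ e := Real.rpow_pos_of_pos (by norm_num) _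
  have hD0 : 0 < D := by positivity
  have hstep : ∀ n, 1 ≤ n → a (n + 1) ≤ a n + 1 / (2 * (n:ℝ)) * a n + D := by
    intro n hn
    have hnp : (0:ℝ) < n := by exact_mod_cast hn
    set np : ℝ := (n:ℝ) with hnp_def
    set lam : ℝ := np ^ (β - 1) / 4 with hlam_def
    have hlam : 0 < lam := by
      have := Real.rpow_pos_of_pos hnp (β - 1)
      positivity
    obtain ⟨hinner_int, hinner_eq⟩ := hInner n hn
    -- expansion
    have hSsucc : ∀ ω, S X (n + 1) ω = S X n ω + X (n + 1) ω := by
      intro ω; unfold S; rw [Finset.sum_range_succ]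
    have hexp : a (n + 1) = a n + (2 * ∫ ω, ⟪S X n ω, X (n + 1) ω⟫ ∂μ
        + ∫ ω, ‖X (n + 1) ω‖ ^ 2 ∂μ) := by
      have hptw : ∀ ω, ‖S X (n + 1) ω‖ ^ 2
          = ‖S X n ω‖ ^ 2 + (2 * ⟪S X n ω, X (n + 1) ω⟫ + ‖X (n + 1) ω‖ ^ 2) := by
        intro ω
        rw [hSsucc ω, norm_add_sq_real]
        ring
      have : a (n + 1) = ∫ ω, (‖S X n ω‖ ^ 2
          + (2 * ⟪S X n ω, X (n + 1) ω⟫ + ‖X (n + 1) ω‖ ^ 2)) ∂μ := by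
        simp only [ha_def]
        exact integral_congr_ae (Eventually.of_forall fun ω => hptw ω)
      rw [this]
      have hB : Integrable (fun ω => 2 * ⟪S X n ω, X (n + 1) ω⟫ + ‖X (n + 1) ω‖ ^ 2) μ :=
        (hinner_int.const_mul 2).add (hX2sq (n + 1) (by omega))
      rw [integral_add (hS2int n) hB,
        integral_add (hinner_int.const_mul 2) (hX2sq (n + 1) (by omega)),
        integral_const_mul]
    -- Young bound
    have hq1 : (1:ℝ) ≤ α + 1 := by linarith
    have hq2 : α + 1 < 2 := by linarith
    have he_eq : (α + 1) / (2 - (α + 1)) = e := by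
      rw [he_def, show (2:ℝ) - (α + 1) = 1 - α by ring]
    have hyoung : ∫ ω, ‖S X n ω‖ ^ (α + 1) ∂μ ≤ lam * a n + lam ^ (-e) := by
      have hint : Integrable (fun ω => lam * ‖S X n ω‖ ^ 2 + lam ^ (-e)) μ :=
        ((hS2int n).const_mul lam).add (integrable_const _)
      have hmono := integral_mono_of_nonneg
        (f := fun ω => ‖S X n ω‖ ^ (α + 1))
        (g := fun ω => lam * ‖S X n ω‖ ^ 2 + lam ^ (-e))
        (Eventually.of_forall fun ω => Real.rpow_nonneg (norm_nonneg _) _) hint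
        (Eventually.of_forall fun ω => by
          have := young_aux hq1 hq2 hlam (norm_nonneg (S X n ω))
          rwa [he_eq] at this)
      calc ∫ ω, ‖S X n ω‖ ^ (α + 1) ∂μ
          ≤ ∫ ω, (lam * ‖S X n ω‖ ^ 2 + lam ^ (-e)) ∂μ := hmono
        _ = lam * a n + lam ^ (-e) := by
            rw [integral_add ((hS2int n).const_mul lam) (integrable_const _),
              integral_const_mul, integral_const]
            simp [ha_def]
    -- rpow algebra
    have hc0 : (0:ℝ) < np ^ β := Real.rpow_pos_of_pos hnp β
    have hc1 : 2 * (np ^ β)⁻¹ * lam = 1 / (2 * np) := by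
      have hmul : np ^ (-β) * np ^ (β - 1) = np⁻¹ := by
        rw [← Real.rpow_add hnp, show -β + (β - 1) = -1 by ring, Real.rpow_neg_one]
      rw [hlam_def, ← Real.rpow_neg hnp.le]
      calc 2 * np ^ (-β) * (np ^ (β - 1) / 4) = np ^ (-β) * np ^ (β - 1) / 2 := by ring
        _ = np⁻¹ / 2 := by rw [hmul]
        _ = 1 / (2 * np) := by rw [inv_eq_one_div]; ring
    have hc2 : 2 * (np ^ β)⁻¹ * lam ^ (-e) = 2 * (4:ℝ) ^ e := by
      have hbe : (β - 1) * (-e) = β := by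
        rw [hβ, he_def]
        field_simp
        ring
      have hlam_pow : lam ^ (-e) = np ^ β * (4:ℝ) ^ e := by
        rw [hlam_def, Real.div_rpow (Real.rpow_nonneg hnp.le _) (by norm_num),
          ← Real.rpow_mul hnp.le, hbe, Real.rpow_neg (by norm_num : (0:ℝ) ≤ 4),
          div_eq_mul_inv, inv_inv]
      rw [hlam_pow]
      field_simp
    have hdriftbound : 2 * ∫ ω, ⟪S X n ω, X (n + 1) ω⟫ ∂μ
        ≤ 1 / (2 * np) * a n + 2 * (4:ℝ) ^ e := by
      rw [hinner_eq]
      have : 2 * ((np ^ β)⁻¹ * ∫ ω, ‖S X n ω‖ ^ (α + 1) ∂μ)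
          ≤ 2 * ((np ^ β)⁻¹ * (lam * a n + lam ^ (-e))) := by
        apply mul_le_mul_of_nonneg_left _ (by norm_num)
        exact mul_le_mul_of_nonneg_left hyoung (by positivity)
      calc 2 * ((np ^ β)⁻¹ * ∫ ω, ‖S X n ω‖ ^ (α + 1) ∂μ)
          ≤ 2 * ((np ^ β)⁻¹ * (lam * a n + lam ^ (-e))) := this
        _ = 2 * (np ^ β)⁻¹ * lam * a n + 2 * (np ^ β)⁻¹ * lam ^ (-e) := by ring
        _ = 1 / (2 * np) * a n + 2 * (4:ℝ) ^ e := by rw [hc1, hc2]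
    rw [hexp, hVar n hn, hD_def]
    linarith
  -- induction: a n ≤ K n
  set K : ℝ := max (a 1) (2 * D) with hK_def
  have hbound : ∀ n, 1 ≤ n → a n ≤ K * n := by
    intro n hn
    induction n, hn using Nat.le_induction with
    | base =>
      have hb := le_max_left (a 1) (2 * D)
      rw [← hK_def] at hb
      simpa using hb
    | succ n hn ih =>
      have hnp : (0:ℝ) < n := by exact_mod_cast hn
      have h2 : 1 / (2 * (n:ℝ)) * a n ≤ 1 / (2 * (n:ℝ)) * (K * n) :=
        mul_le_mul_of_nonneg_left ih (by positivity)
      have h3 : 1 / (2 * (n:ℝ)) * (K * n) = K / 2 := by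
        field_simp
      have hKD : D ≤ K / 2 := by
        have := le_max_right (a 1) (2 * D)
        rw [← hK_def] at this
        linarith
      have hs := hstep n hn
      have : a (n + 1) ≤ K * n + K / 2 + K / 2 := by linarith
      push_cast
      linarith
  -- conclusion
  refine ⟨ENNReal.ofReal K, ENNReal.ofReal_lt_top, fun n hn => ?_⟩
  have hnp : (0:ℝ) < n := by exact_mod_cast hn
  have hsmul : ∀ ω, ‖(Real.sqrt n)⁻¹ • S X n ω‖ ^ 2 = (n:ℝ)⁻¹ * ‖S X n ω‖ ^ 2 := by
    intro ω
    rw [norm_smul, mul_pow, Real.norm_eq_abs,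
      abs_of_nonneg (inv_nonneg.mpr (Real.sqrt_nonneg _)), inv_pow, Real.sq_sqrt hnp.le]
  have hint : Integrable (fun ω => ‖(Real.sqrt n)⁻¹ • S X n ω‖ ^ 2) μ := by
    have : (fun ω => ‖(Real.sqrt n)⁻¹ • S X n ω‖ ^ 2)
        = fun ω => (n:ℝ)⁻¹ * ‖S X n ω‖ ^ 2 := funext hsmul
    rw [this]
    exact (hS2int n).const_mul _
  have hkey : ∫⁻ ω, (‖(Real.sqrt n)⁻¹ • S X n ω‖₊ : ℝ≥0∞) ^ 2 ∂μ
      = ENNReal.ofReal (∫ ω, ‖(Real.sqrt n)⁻¹ • S X n ω‖ ^ 2 ∂μ) := by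
    rw [ofReal_integral_eq_lintegral_ofReal hint (Eventually.of_forall fun ω => by positivity)]
    refine lintegral_congr fun ω => ?_
    rw [← enorm_eq_nnnorm, ← ofReal_norm, ← ENNReal.ofReal_pow (norm_nonneg _)]
  rw [hkey]
  apply ENNReal.ofReal_le_ofReal
  have hval : ∫ ω, ‖(Real.sqrt n)⁻¹ • S X n ω‖ ^ 2 ∂μ = (n:ℝ)⁻¹ * a n := by
    rw [show (fun ω => ‖(Real.sqrt n)⁻¹ • S X n ω‖ ^ 2)
      = fun ω => (n:ℝ)⁻¹ * ‖S X n ω‖ ^ 2 from funext hsmul, integral_const_mul]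
  rw [hval]
  calc (n:ℝ)⁻¹ * a n ≤ (n:ℝ)⁻¹ * (K * n) :=
        mul_le_mul_of_nonneg_left (hbound n hn) (by positivity)
    _ = K := by field_simp



end RWSD
end
end

section
/- Fix m ∈ ℕ and 0 < ε < min{1/2, γ − 1/2}. Then almost surely on the event {σ_{m,ε} = ∞}, the increments V_{n+1} − V_n converge to 0 as n → ∞. -/
open MeasureTheory Filter Real
open scoped ENNReal NNReal Topology RealInnerProductSpace

noncomputable section

namespace RWSD

variable {Ω : Type*} {d : ℕ}

/-- The rescaled walk `G_n = n^{−γ} S_n`. -/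
def G (X : ℕ → Ω → EuclideanSpace ℝ (Fin d)) (γ : ℝ) (n : ℕ) (ω : Ω) :
    EuclideanSpace ℝ (Fin d) := ((n : ℝ) ^ (-γ)) • S X n ω

/-- `V_n = ‖G_n‖²`. -/
def V (X : ℕ → Ω → EuclideanSpace ℝ (Fin d)) (γ : ℝ) (n : ℕ) (ω : Ω) : ℝ :=
  ‖G X γ n ω‖ ^ 2

/-- `h(v) = 2 v (v^{(α−1)/2} − γ)` (with `h 0 = 0`). -/
def hfun (α γ v : ℝ) : ℝ := 2 * v * (v ^ ((α - 1) / 2) - γ)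

/-- The hitting time `σ_{m,ε} = inf {n ≥ 1 : ‖G_n‖ n^{−ε} ≥ m}`, valued in `ℕ∞`. -/
def hitTime (X : ℕ → Ω → EuclideanSpace ℝ (Fin d)) (γ ε : ℝ) (m : ℕ) (ω : Ω) : ℕ∞ :=
  sInf {N : ℕ∞ | ∃ n : ℕ, N = (n : ℕ∞) ∧ 1 ≤ n ∧
    (m : ℝ) ≤ ‖G X γ n ω‖ * (n : ℝ) ^ (-ε)}


section Aux

lemma bc_aux [MeasurableSpace Ω] (μ : Measure Ω) [IsProbabilityMeasure μ]
    (X : ℕ → Ω → EuclideanSpace ℝ (Fin d)) (hmeas : ∀ n, Measurable (X n))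
    (p : ℝ) (hp : 2 < p) (C : ℝ≥0∞) (hC : C < ⊤)
    (hmom : ∀ n : ℕ, 1 ≤ n → ∫⁻ ω, ENNReal.ofReal (‖X n ω‖ ^ p) ∂μ ≤ C)
    (q : ℝ) (hq : 1/2 < q) :
    ∀ᵐ ω ∂μ, Tendsto (fun n : ℕ => ‖X n ω‖ * (n:ℝ) ^ (-q)) atTop (𝓝 0) := by
  have hp0 : (0:ℝ) < p := by linarith
  have hq0 : (0:ℝ) < q := by linarith
  have hqp : 1 < q * p := by nlinarith
  have key : ∀ j : ℕ, ∀ᵐ ω ∂μ, ∀ᶠ n in atTop,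
      ‖X n ω‖ * (n:ℝ) ^ (-q) < 1/(j+1) := by
    intro j
    set s : ℕ → Set Ω := fun n => {ω | 1/((j:ℝ)+1) ≤ ‖X n ω‖ * (n:ℝ) ^ (-q)} with hs
    have hjpos : (0:ℝ) < (j:ℝ) + 1 := by positivity
    have hbound : ∀ n : ℕ, μ (s n) ≤
        C * ENNReal.ofReal (((j:ℝ)+1) ^ p * (n:ℝ) ^ (-(q*p))) := by
      intro n
      rcases Nat.eq_zero_or_pos n with h0 | hn1
      · subst h0
        have : s 0 = ∅ := by
          ext ω
          simp only [hs, Set.mem_setOf_eq, Set.mem_empty_iff_false, iff_false, not_le]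
          rw [Nat.cast_zero, Real.zero_rpow (by linarith : -q ≠ 0), mul_zero]
          positivity
        simp [this]
      · have hN : (0:ℝ) < (n:ℝ) := by exact_mod_cast hn1
        set t : ℝ := ((n:ℝ) ^ q / ((j:ℝ)+1)) ^ p with ht
        have htpos : 0 < t := by positivity
        have hsub : s n ⊆ {ω | ENNReal.ofReal t ≤ ENNReal.ofReal (‖X n ω‖ ^ p)} := by
          intro ω hω
          simp only [hs, Set.mem_setOf_eq] at hω ⊢
          apply ENNReal.ofReal_le_ofReal
          apply Real.rpow_le_rpow (by positivity) _ hp0.le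
          rw [div_le_iff₀ hjpos]
          calc (n:ℝ) ^ q = (1/((j:ℝ)+1) * ((j:ℝ)+1)) * (n:ℝ) ^ q := by
                field_simp
            _ ≤ (‖X n ω‖ * (n:ℝ) ^ (-q) * ((j:ℝ)+1)) * (n:ℝ) ^ q := by
                apply mul_le_mul_of_nonneg_right _ (by positivity)
                exact mul_le_mul_of_nonneg_right hω (by positivity)
            _ = ‖X n ω‖ * ((n:ℝ) ^ (-q) * (n:ℝ) ^ q) * ((j:ℝ)+1) := by ring
            _ = ‖X n ω‖ * ((j:ℝ)+1) := by
                rw [← Real.rpow_add hN]; simp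
        have hmarkov : ENNReal.ofReal t * μ (s n) ≤ C := by
          calc ENNReal.ofReal t * μ (s n)
              ≤ ENNReal.ofReal t * μ {ω | ENNReal.ofReal t ≤ ENNReal.ofReal (‖X n ω‖ ^ p)} :=
                mul_le_mul_right (measure_mono hsub) _
            _ ≤ ∫⁻ ω, ENNReal.ofReal (‖X n ω‖ ^ p) ∂μ :=
                mul_meas_ge_le_lintegral₀
                  (ENNReal.measurable_ofReal.comp
                    ((hmeas n).norm.pow measurable_const)).aemeasurable _
            _ ≤ C := hmom n hn1
        have hinv : t⁻¹ = ((j:ℝ)+1) ^ p * (n:ℝ) ^ (-(q*p)) := by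
          rw [ht, Real.div_rpow (by positivity) hjpos.le, ← Real.rpow_mul hN.le,
            Real.rpow_neg hN.le, inv_div, div_eq_mul_inv, mul_comm]
        calc μ (s n) ≤ C / ENNReal.ofReal t := by
              rw [ENNReal.le_div_iff_mul_le
                (Or.inl (ENNReal.ofReal_pos.2 htpos).ne')
                (Or.inl ENNReal.ofReal_ne_top), mul_comm]
              exact hmarkov
          _ = C * ENNReal.ofReal (((j:ℝ)+1) ^ p * (n:ℝ) ^ (-(q*p))) := by
              rw [div_eq_mul_inv, ← ENNReal.ofReal_inv_of_pos htpos, hinv]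
    have hsummable : Summable (fun n : ℕ => ((j:ℝ)+1)^p * (n:ℝ)^(-(q*p))) :=
      (Real.summable_nat_rpow.2 (by linarith)).mul_left _
    have htsum : (∑' n, μ (s n)) ≠ ⊤ := by
      apply ne_top_of_le_ne_top _ (ENNReal.tsum_le_tsum hbound)
      rw [ENNReal.tsum_mul_left,
        ← ENNReal.ofReal_tsum_of_nonneg (fun n => by positivity) hsummable]
      exact ENNReal.mul_ne_top hC.ne ENNReal.ofReal_ne_top
    filter_upwards [ae_eventually_notMem htsum] with ω hω
    exact hω.mono fun n hn => not_le.1 hn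
  filter_upwards [ae_all_iff.2 key] with ω hω
  rw [tendsto_order]
  constructor
  · intro a ha
    filter_upwards [] with n
    have : 0 ≤ ‖X n ω‖ * (n:ℝ) ^ (-q) := by positivity
    linarith
  · intro a ha
    obtain ⟨j, hj⟩ := exists_nat_one_div_lt ha
    exact (hω j).mono fun n hn => hn.trans hj


lemma pathwise {X : ℕ → Ω → EuclideanSpace ℝ (Fin d)} {ω : Ω} (γ ε : ℝ) (m : ℕ)
    (hε0 : 0 < ε) (hε1 : ε < 1/2) (hγ1 : γ ≤ 1) (hεγ : ε < γ)
    (hG : ∀ n : ℕ, 1 ≤ n → ‖G X γ n ω‖ * (n:ℝ) ^ (-ε) < m)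
    (hX : Tendsto (fun n : ℕ => ‖X n ω‖ * (n:ℝ) ^ (-(γ-ε))) atTop (𝓝 0)) :
    Tendsto (fun n : ℕ => V X γ (n+1) ω - V X γ n ω) atTop (𝓝 0) := by
  have hγ0 : 0 < γ := by linarith
  apply squeeze_zero_norm' (a := fun n : ℕ =>
    2*(m:ℝ)^2*((n:ℝ)+1)^(2*ε-1) + 2*(m:ℝ)*(‖X (n+1) ω‖ * ((n:ℝ)+1)^(-(γ-ε))))
  · filter_upwards [eventually_ge_atTop 1] with n hn
    have hN : (0:ℝ) < (n:ℝ) := by exact_mod_cast hn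
    have hN1 : (0:ℝ) < (n:ℝ)+1 := by linarith
    set N : ℝ := (n:ℝ) with hNdef
    have ha : ∀ k : ℕ, 1 ≤ k → ‖G X γ k ω‖ ≤ m * (k:ℝ)^ε := by
      intro k hk
      have hk0 : (0:ℝ) < (k:ℝ) := by exact_mod_cast hk
      have h1 : ((k:ℝ))^(-ε) * (k:ℝ)^ε = 1 := by
        rw [← Real.rpow_add hk0]; simp
      calc ‖G X γ k ω‖ = (‖G X γ k ω‖ * (k:ℝ)^(-ε)) * (k:ℝ)^ε := by
            rw [mul_assoc, h1, mul_one]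
        _ ≤ m * (k:ℝ)^ε :=
            mul_le_mul_of_nonneg_right (hG k hk).le (Real.rpow_nonneg hk0.le ε)
    have hE1 : N^ε ≤ (N+1)^ε := Real.rpow_le_rpow hN.le (by linarith) hε0.le
    have hB : ‖G X γ n ω‖ ≤ m * (N+1)^ε :=
      (ha n hn).trans (by gcongr)
    have hA : ‖G X γ (n+1) ω‖ ≤ m * (N+1)^ε := by
      have := ha (n+1) (by omega)
      push_cast at this
      exact this
    have hSn : ‖S X n ω‖ ≤ m * N^(γ+ε) := by
      have hGn : ‖G X γ n ω‖ = N^(-γ) * ‖S X n ω‖ := by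
        simp [G, norm_smul, abs_of_pos (Real.rpow_pos_of_pos hN (-γ))]
        exact Or.inl (abs_of_pos (Real.rpow_pos_of_pos hN (-γ)))
      calc ‖S X n ω‖ = N^γ * (N^(-γ) * ‖S X n ω‖) := by
            rw [← mul_assoc, ← Real.rpow_add hN]; simp
        _ = N^γ * ‖G X γ n ω‖ := by rw [hGn]
        _ ≤ N^γ * (m * N^ε) :=
            mul_le_mul_of_nonneg_left (ha n hn) (Real.rpow_nonneg hN.le γ)
        _ = m * N^(γ+ε) := by rw [Real.rpow_add hN]; ring
    have hmono : (N+1)^(-γ) ≤ N^(-γ) := by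
      rw [Real.rpow_neg hN.le, Real.rpow_neg hN1.le]
      exact inv_anti₀ (Real.rpow_pos_of_pos hN γ)
        (Real.rpow_le_rpow hN.le (by linarith) hγ0.le)
    have hdiffG : ‖G X γ (n+1) ω - G X γ n ω‖ ≤
        (N^(-γ) - (N+1)^(-γ)) * ‖S X n ω‖ + (N+1)^(-γ) * ‖X (n+1) ω‖ := by
      have hGrep : G X γ (n+1) ω - G X γ n ω =
          ((N+1)^(-γ) - N^(-γ)) • S X n ω + ((N+1)^(-γ)) • X (n+1) ω := by
        simp only [G, S, Finset.sum_range_succ]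
        push_cast
        module
      rw [hGrep]
      refine (norm_add_le _ _).trans ?_
      rw [norm_smul, norm_smul, Real.norm_eq_abs, Real.norm_eq_abs,
        abs_sub_comm, abs_of_nonneg (by linarith),
        abs_of_pos (Real.rpow_pos_of_pos hN1 (-γ))]
    have hkey : N^(-γ) - (N+1)^(-γ) ≤ N^(-γ) / (N+1) := by
      have e1 : N^(1-γ) ≤ (N+1)^(1-γ) :=
        Real.rpow_le_rpow hN.le (by linarith) (by linarith)
      have e2 : N^(1-γ) = N * N^(-γ) := by
        rw [show (1-γ) = 1 + (-γ) by ring, Real.rpow_add hN, Real.rpow_one]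
      have e3 : (N+1)^(1-γ) = (N+1) * (N+1)^(-γ) := by
        rw [show (1-γ) = 1 + (-γ) by ring, Real.rpow_add hN1, Real.rpow_one]
      rw [e2, e3] at e1
      rw [le_div_iff₀ hN1]
      nlinarith
    have hD : ‖G X γ (n+1) ω - G X γ n ω‖ ≤
        m * (N+1)^(ε-1) + (N+1)^(-γ) * ‖X (n+1) ω‖ := by
      refine hdiffG.trans (add_le_add_left ?_ _)
      have hNg : N^(-γ) * N^(γ+ε) = N^ε := by
        rw [← Real.rpow_add hN]; ring_nf
      calc (N^(-γ) - (N+1)^(-γ)) * ‖S X n ω‖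
          ≤ (N^(-γ)/(N+1)) * (m * N^(γ+ε)) :=
            mul_le_mul hkey hSn (norm_nonneg _) (by positivity)
        _ = m * ((N^(-γ) * N^(γ+ε))/(N+1)) := by ring
        _ = m * (N^ε/(N+1)) := by rw [hNg]
        _ ≤ m * ((N+1)^ε/(N+1)) := by gcongr
        _ = m * (N+1)^(ε-1) := by
            rw [show (ε-1) = ε + (-1) by ring, Real.rpow_add hN1,
              Real.rpow_neg_one]
            ring
    have h1' : (N+1)^(ε-1) * (N+1)^ε = (N+1)^(2*ε-1) := by
      rw [← Real.rpow_add hN1]; ring_nf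
    have h2' : (N+1)^(-γ) * (N+1)^ε = (N+1)^(-(γ-ε)) := by
      rw [← Real.rpow_add hN1]; ring_nf
    calc ‖V X γ (n+1) ω - V X γ n ω‖
        = |‖G X γ (n+1) ω‖ - ‖G X γ n ω‖| * (‖G X γ (n+1) ω‖ + ‖G X γ n ω‖) := by
          rw [Real.norm_eq_abs, V, V,
            show ‖G X γ (n+1) ω‖^2 - ‖G X γ n ω‖^2 =
              (‖G X γ (n+1) ω‖ - ‖G X γ n ω‖) * (‖G X γ (n+1) ω‖ + ‖G X γ n ω‖) by ring,
            abs_mul, abs_of_nonneg (add_nonneg (norm_nonneg _) (norm_nonneg _))]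
      _ ≤ ‖G X γ (n+1) ω - G X γ n ω‖ * (2*m*(N+1)^ε) :=
          mul_le_mul (abs_norm_sub_norm_le _ _) (by linarith) (by positivity)
            (norm_nonneg _)
      _ ≤ (m * (N+1)^(ε-1) + (N+1)^(-γ) * ‖X (n+1) ω‖) * (2*m*(N+1)^ε) :=
          mul_le_mul_of_nonneg_right hD (by positivity)
      _ = 2*(m:ℝ)^2*((n:ℝ)+1)^(2*ε-1) + 2*(m:ℝ)*(‖X (n+1) ω‖ * ((n:ℝ)+1)^(-(γ-ε))) := by
          linear_combination (2*(m:ℝ)^2) * h1' + (2*(m:ℝ)*‖X (n+1) ω‖) * h2'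
  · have t1 : Tendsto (fun n : ℕ => ((n:ℝ)+1)^(2*ε-1)) atTop (𝓝 0) := by
      have h := (tendsto_rpow_neg_atTop (y := 1-2*ε) (by linarith)).comp
        (tendsto_atTop_add_const_right atTop (1:ℝ) tendsto_natCast_atTop_atTop)
      simpa [Function.comp_def, show -(1-2*ε) = 2*ε-1 by ring] using h
    have t2 : Tendsto (fun n : ℕ => ‖X (n+1) ω‖ * ((n:ℝ)+1)^(-(γ-ε))) atTop (𝓝 0) := by
      have h := hX.comp (tendsto_add_atTop_nat 1)
      simp only [Function.comp_def] at h
      push_cast at h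
      exact h
    simpa using (t1.const_mul (2*(m:ℝ)^2)).add (t2.const_mul (2*(m:ℝ)))


end Aux

/-- **Lemma (vanishing increments on the localization event).**
For `m ∈ ℕ` and `0 < ε < min{1/2, γ − 1/2}`, almost surely on `{σ_{m,ε} = ∞}`
the increments `V_{n+1} − V_n` tend to `0`. -/
theorem increments_tendsto_zero_on_event
    [m0 : MeasurableSpace Ω] (μ : Measure Ω) [IsProbabilityMeasure μ]
    (X : ℕ → Ω → EuclideanSpace ℝ (Fin d)) (α β : ℝ)
    (Sig : Matrix (Fin d) (Fin d) ℝ)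
    (hα0 : 0 < α) (hαβ : α ≤ β) (hβ1 : β < 1)
    (hcrit : 2 * β - 1 < α)
    (h : Assumptions μ X α β Sig)
    (γ : ℝ) (hγ : γ = (1 - β) / (1 - α))
    (m : ℕ) (hm : 1 ≤ m)
    (ε : ℝ) (hε0 : 0 < ε) (hε1 : ε < 1 / 2) (hε2 : ε < γ - 1 / 2) :
    ∀ᵐ ω ∂μ, hitTime X γ ε m ω = ⊤ →
      Tendsto (fun n : ℕ => V X γ (n + 1) ω - V X γ n ω) atTop (𝓝 0) := by
  obtain ⟨p, hp, C, hC, hmom⟩ := h.moment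
  have hα1 : α < 1 := lt_of_le_of_lt hαβ hβ1
  have hγ1 : γ ≤ 1 := by
    rw [hγ, div_le_one (by linarith)]; linarith
  have hbc := bc_aux μ X h.measurable p hp C hC hmom (γ-ε) (by linarith)
  filter_upwards [hbc] with ω hω hhit
  have hG : ∀ n : ℕ, 1 ≤ n → ‖G X γ n ω‖ * (n:ℝ)^(-ε) < m := by
    intro n hn
    by_contra hc
    push_neg at hc
    have h2 : hitTime X γ ε m ω ≤ (n : ℕ∞) := sInf_le ⟨n, rfl, hn, hc⟩
    rw [hhit, top_le_iff] at h2
    exact ENat.coe_ne_top n h2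
  exact pathwise γ ε m hε0 hε1 hγ1 (by linarith) hG hω


end RWSD
end
end
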